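/- arXiv:2602.20448 — 5 statements merged into one kernel-verified Lean document; each statement's English description precedes it below -/
import Mathlib

section
/- For all real numbers a > 0 and b > 0, the integral over s ∈ (0, ∞) of s^(−1/2) · exp(−(a·s + b/s)/2) with respect to s equals √(2π/a) · exp(−√(a·b)). -/
/-!
Substituting `s = t ^ 2` turns the integral into `2 ∫₀^∞ exp (-(α t² + β / t²)) dt` with
`α = a / 2`, `β = b / 2`. Completing the square and rescaling, this is
`exp (-2 √(αβ)) / √α` times `∫₀^∞ exp (-(u - c / u)²) du` with `c = √(αβ)`, which is half the
Gaussian integral by the Cauchy–Schlömilch transformation: `u ↦ u - c / u` maps `(0, ∞)` onto `ℝ`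
with Jacobian `1 + c / u²`, and the inversion `u ↦ c / u` shows that the `c / u²` part contributes
as much as the `1` part.
-/

open MeasureTheory Real Set

section Inversion

variable {K : Type*} [Field K] [LinearOrder K] [IsStrictOrderedRing K]

theorem bijOn_const_div_Ioi {c : K} (hc : 0 < c) : BijOn (fun t => c / t) (Ioi 0) (Ioi 0) :=
  have hmaps : MapsTo (fun t => c / t) (Ioi 0) (Ioi 0) := fun _ ht => div_pos hc ht
  have hinv : LeftInvOn (fun t => c / t) (fun t => c / t) (Ioi 0) :=
    fun _ _ => div_div_cancel₀ hc.ne'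
  InvOn.bijOn ⟨hinv, hinv⟩ hmaps hmaps

theorem strictMonoOn_sub_const_div {c : K} (hc : 0 ≤ c) :
    StrictMonoOn (fun t => t - c / t) (Ioi 0) := fun x hx _ _ hxy => by
  have : c / _ ≤ c / x := div_le_div_of_nonneg_left hc hx hxy.le
  dsimp only
  linarith

end Inversion

theorem hasDerivAt_const_div {𝕜 : Type*} [NontriviallyNormedField 𝕜] (c : 𝕜) {t : 𝕜}
    (ht : t ≠ 0) : HasDerivAt (fun t => c / t) (-(c / t ^ 2)) t := by
  simpa [div_eq_mul_inv] using (hasDerivAt_inv ht).const_mul c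

theorem image_sub_const_div_Ioi {c : ℝ} (hc : 0 < c) : (fun t => t - c / t) '' Ioi 0 = univ := by
  refine eq_univ_of_forall fun y => ?_
  -- the positive root of `t ^ 2 - y * t - c`
  set D := √(y ^ 2 + 4 * c)
  have hD : D ^ 2 = y ^ 2 + 4 * c := sq_sqrt (by positivity)
  have hyD : |y| < D := by
    rw [← sqrt_sq_eq_abs]
    exact sqrt_lt_sqrt (sq_nonneg y) (by linarith)
  have ht : 0 < y + D := by linarith [neg_abs_le y]
  refine ⟨(y + D) / 2, half_pos ht, ?_⟩
  field_simp
  linear_combination hD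

section ChangeOfVariables

variable {E : Type*} [NormedAddCommGroup E] [NormedSpace ℝ E]

theorem integral_comp_const_div_Ioi {c : ℝ} (hc : 0 < c) (g : ℝ → E) :
    ∫ t in Ioi 0, (c / t ^ 2) • g (c / t) = ∫ t in Ioi 0, g t := by
  have hderiv : ∀ t ∈ Ioi (0 : ℝ), HasDerivWithinAt (fun t => c / t) (-(c / t ^ 2)) (Ioi 0) t :=
    fun t (ht : 0 < t) => (hasDerivAt_const_div c ht.ne').hasDerivWithinAt
  have hcv := integral_image_eq_integral_abs_deriv_smul measurableSet_Ioi hderiv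
    (bijOn_const_div_Ioi hc).injOn g
  rw [(bijOn_const_div_Ioi hc).image_eq] at hcv
  rw [hcv]
  refine setIntegral_congr_fun measurableSet_Ioi fun t (ht : 0 < t) => ?_
  rw [abs_neg, abs_of_pos (by positivity)]

theorem integral_comp_sq_Ioi (g : ℝ → E) :
    ∫ t in Ioi 0, (2 * t) • g (t ^ 2) = ∫ s in Ioi 0, g s := by
  simpa [show (2 : ℝ) - 1 = 1 by norm_num] using
    integral_comp_rpow_Ioi_of_pos (g := g) (p := 2) two_pos

theorem integral_comp_sub_const_div_Ioi {h : ℝ → E} (heven : ∀ u, h (-u) = h u)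
    (hint : Integrable h) {c : ℝ} (hc : 0 < c) :
    ∫ t in Ioi 0, h (t - c / t) = (2 : ℝ)⁻¹ • ∫ u, h u := by
  set φ : ℝ → ℝ := fun t => t - c / t
  have hderiv : ∀ t ∈ Ioi (0 : ℝ), HasDerivWithinAt φ (1 + c / t ^ 2) (Ioi 0) t :=
    fun t (ht : 0 < t) => by
      simpa [sub_neg_eq_add] using
        ((hasDerivAt_id' t).fun_sub (hasDerivAt_const_div c ht.ne')).hasDerivWithinAt
  have hinj : InjOn φ (Ioi 0) := (strictMonoOn_sub_const_div hc.le).injOn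
  have habs : ∀ t : ℝ, |1 + c / t ^ 2| = 1 + c / t ^ 2 := fun t => abs_of_pos (by positivity)
  have hcv : ∫ u, h u = ∫ t in Ioi 0, (1 + c / t ^ 2) • h (φ t) := by
    rw [← setIntegral_univ, ← image_sub_const_div_Ioi hc,
      integral_image_eq_integral_abs_deriv_smul measurableSet_Ioi hderiv hinj]
    simp only [habs]
  have hcv_int : IntegrableOn (fun t => (1 + c / t ^ 2) • h (φ t)) (Ioi 0) := by
    simpa only [habs] using
      (integrableOn_image_iff_integrableOn_abs_deriv_smul measurableSet_Ioi hderiv hinj h).1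
        (by rw [image_sub_const_div_Ioi hc]; exact hint.integrableOn)
  have hcomp_int : IntegrableOn (fun t => h (φ t)) (Ioi 0) := by
    have hbdd : ∀ t : ℝ, ‖(1 + c / t ^ 2)⁻¹‖ ≤ 1 := fun t => by
      rw [norm_inv, Real.norm_of_nonneg (by positivity)]
      exact inv_le_one_of_one_le₀ (by simp; positivity)
    have hmeas : Measurable fun t : ℝ => (1 + c / t ^ 2)⁻¹ := by fun_prop
    refine IntegrableOn.congr_fun (hcv_int.bdd_smul 1 hmeas.aestronglyMeasurable
      (ae_of_all _ hbdd)) (fun t _ => ?_) measurableSet_Ioi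
    simp [smul_smul, inv_mul_cancel₀ (show 1 + c / t ^ 2 ≠ 0 by positivity)]
  -- the inversion `t ↦ c / t` maps `φ` to `-φ`
  have hflip : ∫ t in Ioi 0, (c / t ^ 2) • h (φ t) = ∫ t in Ioi 0, h (φ t) := by
    rw [← integral_comp_const_div_Ioi hc (fun t => h (φ t))]
    congr! 3 with t
    rw [← heven]
    simp only [φ, div_div_cancel₀ hc.ne', neg_sub]
  have hsplit : ∫ t in Ioi 0, (c / t ^ 2) • h (φ t)
      = (∫ t in Ioi 0, (1 + c / t ^ 2) • h (φ t)) - ∫ t in Ioi 0, h (φ t) := by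
    rw [← integral_sub hcv_int hcomp_int]
    simp only [add_smul, one_smul, add_sub_cancel_left]
  rw [hcv]
  linear_combination (norm := module) (2⁻¹ : ℝ) • (hsplit - hflip)

end ChangeOfVariables

theorem integral_exp_neg_mul_sq_add_div_sq {α β : ℝ} (hα : 0 < α) (hβ : 0 < β) :
    ∫ t in Ioi 0, exp (-(α * t ^ 2 + β / t ^ 2)) = √(π / α) / 2 * exp (-2 * √(α * β)) := by
  set c := √(α * β)
  have hsquare : ∀ t ∈ Ioi (0 : ℝ),
      exp (-(α * t ^ 2 + β / t ^ 2)) = exp (-2 * c) * exp (-(√α * t - c / (√α * t)) ^ 2) := by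
    intro t (ht : 0 < t)
    rw [← exp_add]
    congr 1
    have : 0 < √α := sqrt_pos.2 hα
    rw [show c = √α * √β from sqrt_mul hα.le β]
    field_simp
    linear_combination t ^ 4 * sq_sqrt hα.le + sq_sqrt hβ.le
  have hgauss : ∫ u, exp (-u ^ 2) = √π := by simpa using integral_gaussian 1
  have hint : Integrable fun u : ℝ => exp (-u ^ 2) := by
    simpa using integrable_exp_neg_mul_sq one_pos
  rw [setIntegral_congr_fun measurableSet_Ioi hsquare, integral_const_mul,
    integral_comp_mul_left_Ioi (fun u => exp (-(u - c / u) ^ 2)) 0 (sqrt_pos.2 hα), mul_zero,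
    integral_comp_sub_const_div_Ioi (h := fun u => exp (-u ^ 2)) (fun u => by simp) hint
      (sqrt_pos.2 (mul_pos hα hβ)), hgauss, sqrt_div' π hα.le, smul_eq_mul]
  ring

theorem gig_half_integral (a b : ℝ) (ha : 0 < a) (hb : 0 < b) :
    ∫ s in Set.Ioi (0 : ℝ), s ^ (-(1 : ℝ) / 2) * Real.exp (-(a * s + b / s) / 2)
      = Real.sqrt (2 * π / a) * Real.exp (-Real.sqrt (a * b)) := by
  have hintegrand : ∀ t ∈ Ioi (0 : ℝ),
      (2 * t) • ((t ^ 2) ^ (-(1 : ℝ) / 2) * exp (-(a * t ^ 2 + b / t ^ 2) / 2))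
        = 2 * exp (-(a / 2 * t ^ 2 + b / 2 / t ^ 2)) := by
    intro t (ht : 0 < t)
    rw [neg_div, rpow_neg (sq_nonneg t), ← sqrt_eq_rpow, sqrt_sq ht.le, smul_eq_mul]
    field_simp
  have hsqrt : √(a / 2 * (b / 2)) = √(a * b) / 2 := by
    rw [show a / 2 * (b / 2) = a * b / 2 ^ 2 by ring, sqrt_div' _ (sq_nonneg 2),
      sqrt_sq zero_le_two]
  rw [← integral_comp_sq_Ioi, setIntegral_congr_fun measurableSet_Ioi hintegrand,
    integral_const_mul, integral_exp_neg_mul_sq_add_div_sq (half_pos ha) (half_pos hb), hsqrt,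
    div_div_eq_mul_div]
  ring_nf
end

section
/- For every real number z > 0, ∫₀^∞ exp(−z cosh t) cosh(t/2) dt = √(π/(2z)) · exp(−z); that is, the modified Bessel function of the second kind of order 1/2 satisfies K_{1/2}(z) = √(π/(2z)) e^{−z}. -/
open MeasureTheory Real

/-- `K_{1/2}(z) = √(π/(2z)) e^{−z}`, with `K_ν` given by its integral representation. -/
theorem besselK_half (z : ℝ) (hz : 0 < z) :
    ∫ t in Set.Ioi (0 : ℝ), Real.exp (-z * Real.cosh t) * Real.cosh (t / 2)
      = Real.sqrt (π / (2 * z)) * Real.exp (-z) := by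
  set c : ℝ := Real.sqrt (2 * z) with hc
  have hc0 : 0 < c := Real.sqrt_pos.mpr (by linarith)
  have hc2 : c ^ 2 = 2 * z := Real.sq_sqrt (by linarith)
  set φ : ℝ → ℝ := fun t => c * Real.sinh (t / 2) with hφ
  have hderiv : ∀ t ∈ Set.Ioi (0:ℝ),
      HasDerivWithinAt φ (c * (Real.cosh (t / 2) * (1 / 2))) (Set.Ioi 0) t := by
    intro t _
    exact (((Real.hasDerivAt_sinh (t / 2)).comp t
      ((hasDerivAt_id t).div_const 2)).const_mul c).hasDerivWithinAt
  have hmono : StrictMono φ := by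
    intro a b hab
    exact mul_lt_mul_of_pos_left (Real.sinh_lt_sinh.mpr (by linarith)) hc0
  have himg : φ '' Set.Ioi 0 = Set.Ioi 0 := by
    ext u
    constructor
    · rintro ⟨t, ht, rfl⟩
      have : Real.sinh (t / 2) > 0 := Real.sinh_pos_iff.mpr (by simpa using by linarith [Set.mem_Ioi.mp ht])
      exact Set.mem_Ioi.mpr (mul_pos hc0 this)
    · intro hu
      refine ⟨2 * Real.arsinh (u / c), ?_, ?_⟩
      · have : 0 < u / c := div_pos (Set.mem_Ioi.mp hu) hc0
        have := Real.arsinh_pos_iff.mpr this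
        exact Set.mem_Ioi.mpr (by linarith)
      · show c * Real.sinh (2 * Real.arsinh (u / c) / 2) = u
        rw [mul_div_cancel_left₀ _ (two_ne_zero), Real.sinh_arsinh]
        field_simp
  have key := integral_image_eq_integral_abs_deriv_smul measurableSet_Ioi hderiv
    (hmono.injective.injOn) (fun u => Real.exp (-u ^ 2))
  rw [himg] at key
  have hG : ∫ u in Set.Ioi (0:ℝ), Real.exp (-u ^ 2) = Real.sqrt π / 2 := by
    simpa using integral_gaussian_Ioi 1
  have hint : ∀ t ∈ Set.Ioi (0:ℝ),
      |c * (Real.cosh (t / 2) * (1 / 2))| • Real.exp (-(φ t) ^ 2)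
        = (c / 2 * Real.exp z) * (Real.exp (-z * Real.cosh t) * Real.cosh (t / 2)) := by
    intro t _
    have hcosh : 0 < Real.cosh (t / 2) := Real.cosh_pos _
    have habs : |c * (Real.cosh (t / 2) * (1 / 2))| = c * (Real.cosh (t / 2) * (1 / 2)) :=
      abs_of_pos (by positivity)
    have hcosh2 : Real.cosh t = 2 * Real.sinh (t / 2) ^ 2 + 1 := by
      have := Real.cosh_two_mul (t / 2)
      have h2 : 2 * (t / 2) = t := by ring
      rw [h2] at this
      rw [this, Real.cosh_sq]
      ring
    have hexp : Real.exp (-(φ t) ^ 2) = Real.exp z * Real.exp (-z * Real.cosh t) := by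
      rw [← Real.exp_add]
      congr 1
      have : (φ t) ^ 2 = c ^ 2 * Real.sinh (t / 2) ^ 2 := by rw [hφ]; ring
      rw [this, hc2, hcosh2]
      ring
    rw [smul_eq_mul, habs, hexp]
    ring
  rw [setIntegral_congr_fun measurableSet_Ioi hint, integral_const_mul, hG] at key
  have hI : ∫ t in Set.Ioi (0:ℝ), Real.exp (-z * Real.cosh t) * Real.cosh (t / 2)
      = Real.sqrt π / 2 / (c / 2 * Real.exp z) := by
    field_simp at key ⊢
    linarith [key]
  rw [hI, Real.sqrt_div Real.pi_pos.le, ← hc, Real.exp_neg]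
  field_simp
end

section
/- For all real numbers a > 0, b > 0 and λ ∈ ℝ, the integral over s ∈ (0, ∞) of s^(λ−1) · exp(−(a·s + b/s)/2) with respect to s equals 2 · (b/a)^(λ/2) · K_λ(√(a·b)). In particular, the GIG(λ, a, b) density integrates to 1 over (0, ∞). -/
/-!
Substituting `s = √(b/a) · eᵗ` turns `(a s + b/s)/2` into `√(ab) cosh t` and `s^(λ-1) ds` into
`(b/a)^(λ/2) e^(λt) dt`, so the integral is `(b/a)^(λ/2) ∫_ℝ e^(λt - √(ab) cosh t) dt`.
Averaging this integrand with its reflection under `t ↦ -t` gives the even function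
`e^(-√(ab) cosh t) cosh(λt)`, whose integral over `ℝ` is `2 K_λ(√(ab))`. The normalization
follows because `K_λ(z) > 0` for `z > 0`.
-/

open MeasureTheory Real

/-- The modified Bessel function of the second kind of order `ν`, for `z > 0`. -/
noncomputable def besselK (ν z : ℝ) : ℝ :=
  ∫ t in Set.Ioi (0 : ℝ), Real.exp (-z * Real.cosh t) * Real.cosh (ν * t)

theorem Real.one_add_sq_div_two_le_cosh (t : ℝ) : 1 + t ^ 2 / 2 ≤ cosh t := by
  have hsinh : |t| / 2 ≤ sinh (|t| / 2) := self_le_sinh_iff.mpr (by positivity)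
  calc 1 + t ^ 2 / 2 = 1 + 2 * (|t| / 2) ^ 2 := by rw [div_pow, sq_abs]; ring
    _ ≤ 1 + 2 * sinh (|t| / 2) ^ 2 := by gcongr
    _ = cosh (2 * (|t| / 2)) := by rw [cosh_two_mul, cosh_sq]; ring
    _ = cosh t := by rw [mul_div_cancel₀ _ two_ne_zero, cosh_abs]

-- `cosh t ≥ 1 + t²/2` dominates the integrand by a shifted Gaussian.
theorem integrable_exp_mul_sub_mul_cosh (l : ℝ) {z : ℝ} (hz : 0 < z) :
    Integrable fun t ↦ exp (l * t - z * cosh t) := by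
  have hgauss := ((integrable_exp_neg_mul_sq (half_pos hz)).comp_sub_right (l / z)).const_mul
    (exp (l ^ 2 / (2 * z)))
  refine hgauss.mono' (by fun_prop) (ae_of_all _ fun t ↦ ?_)
  rw [norm_of_nonneg (exp_pos _).le, ← exp_add, exp_le_exp]
  have hsq : l ^ 2 / (2 * z) + -(z / 2) * (t - l / z) ^ 2 = l * t - z * (t ^ 2 / 2) := by
    field_simp; ring
  nlinarith [one_add_sq_div_two_le_cosh t]

theorem integral_exp_mul_sub_mul_cosh (l : ℝ) {z : ℝ} (hz : 0 < z) :
    ∫ t, exp (l * t - z * cosh t) = 2 * besselK l z := by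
  set f := fun t ↦ exp (l * t - z * cosh t)
  set g := fun t ↦ exp (-z * cosh t) * cosh (l * t)
  have hf : Integrable f := integrable_exp_mul_sub_mul_cosh l hz
  have hg : ∀ t, g t = (f t + f (-t)) / 2 := by
    intro t
    simp only [f, g, cosh_eq (l * t), cosh_neg, mul_neg, neg_mul, sub_eq_add_neg, exp_add]
    ring
  calc ∫ t, f t = ∫ t, (f t + f (-t)) / 2 := by
        rw [integral_div, integral_add hf hf.comp_neg, integral_neg_eq_self]; ring
    _ = ∫ t, g |t| := by
        congr 1 with t
        rcases abs_choice t with h | h <;> simp only [h, hg, neg_neg, add_comm]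
    _ = 2 * besselK l z := integral_comp_abs

theorem besselK_pos (l : ℝ) {z : ℝ} (hz : 0 < z) : 0 < besselK l z := by
  have h := integral_exp_pos (integrable_exp_mul_sub_mul_cosh l hz)
  rw [integral_exp_mul_sub_mul_cosh l hz] at h
  linarith

theorem integral_Ioi_zero_eq_integral_mul_exp {E : Type*} [NormedAddCommGroup E]
    [NormedSpace ℝ E] (f : ℝ → E) {c : ℝ} (hc : 0 < c) :
    ∫ s in Set.Ioi 0, f s = ∫ t, (c * exp t) • f (c * exp t) := by
  have himage : (fun t ↦ c * exp t) '' Set.univ = Set.Ioi 0 := by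
    rw [Set.image_univ, Set.range_comp' (c * ·) exp, range_exp, Set.image_const_mul_Ioi_zero hc]
  have hderiv : ∀ t ∈ Set.univ, HasDerivWithinAt (fun t ↦ c * exp t) (c * exp t) Set.univ t :=
    fun t _ ↦ ((hasDerivAt_exp t).const_mul c).hasDerivWithinAt
  have hinj : Set.InjOn (fun t ↦ c * exp t) Set.univ :=
    fun x _ y _ h ↦ exp_injective (mul_left_cancel₀ hc.ne' h)
  rw [← himage, integral_image_eq_integral_abs_deriv_smul MeasurableSet.univ hderiv hinj,
    setIntegral_univ]
  simp only [abs_of_pos (mul_pos hc (exp_pos _))]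

noncomputable def gigKernel (l a b s : ℝ) : ℝ := s ^ (l - 1) * exp (-(a * s + b / s) / 2)

theorem mul_sqrt_div_self {a : ℝ} (ha : 0 ≤ a) (b : ℝ) : a * √(b / a) = √(a * b) := by
  rw [sqrt_div' _ ha, sqrt_mul ha, mul_div_left_comm, div_sqrt, mul_comm]

theorem div_sqrt_div_self {a : ℝ} (ha : 0 ≤ a) (b : ℝ) : b / √(b / a) = √(a * b) := by
  rw [sqrt_div' _ ha, sqrt_mul ha, div_div_eq_mul_div, mul_comm b, mul_div_assoc, div_sqrt]

theorem mul_exp_mul_gigKernel (l : ℝ) {a b : ℝ} (ha : 0 < a) (hb : 0 < b) (t : ℝ) :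
    √(b / a) * exp t * gigKernel l a b (√(b / a) * exp t)
      = (b / a) ^ (l / 2) * exp (l * t - √(a * b) * cosh t) := by
  set c := √(b / a)
  have hs : 0 < c * exp t := mul_pos (sqrt_pos.mpr (div_pos hb ha)) (exp_pos t)
  have hpow : c * exp t * (c * exp t) ^ (l - 1) = (b / a) ^ (l / 2) * exp (l * t) := by
    rw [rpow_sub_one hs.ne', mul_div_cancel₀ _ hs.ne', mul_rpow (sqrt_nonneg _) (exp_pos t).le,
      ← exp_mul, sqrt_eq_rpow, ← rpow_mul (div_pos hb ha).le, mul_comm t,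
      one_div_mul_eq_div]
  have has : a * (c * exp t) = √(a * b) * exp t := by
    rw [← mul_assoc, mul_sqrt_div_self ha.le b]
  have hbs : b / (c * exp t) = √(a * b) * exp (-t) := by
    rw [← div_div, div_sqrt_div_self ha.le b, exp_neg, div_eq_mul_inv]
  rw [gigKernel, ← mul_assoc, hpow, has, hbs, cosh_eq, mul_assoc, ← exp_add]
  congr 2
  ring

theorem integral_gigKernel (l : ℝ) {a b : ℝ} (ha : 0 < a) (hb : 0 < b) :
    ∫ s in Set.Ioi 0, gigKernel l a b s = 2 * (b / a) ^ (l / 2) * besselK l √(a * b) := by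
  rw [integral_Ioi_zero_eq_integral_mul_exp _ (sqrt_pos.mpr (div_pos hb ha))]
  simp only [smul_eq_mul, mul_exp_mul_gigKernel l ha hb]
  rw [integral_const_mul, integral_exp_mul_sub_mul_cosh l (sqrt_pos.mpr (mul_pos ha hb))]
  ring

/-- The GIG kernel integral identity, and normalization of the GIG(λ, a, b) density. -/
theorem gig_integral (l a b : ℝ) (ha : 0 < a) (hb : 0 < b) :
    (∫ s in Set.Ioi (0 : ℝ), s ^ (l - 1) * Real.exp (-(a * s + b / s) / 2)
        = 2 * (b / a) ^ (l / 2) * besselK l (Real.sqrt (a * b)))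
    ∧ (∫ s in Set.Ioi (0 : ℝ),
          ((a / b) ^ (l / 2) / (2 * besselK l (Real.sqrt (a * b))))
            * s ^ (l - 1) * Real.exp (-(a * s + b / s) / 2) = 1) := by
  have hK : besselK l √(a * b) ≠ 0 := (besselK_pos l (sqrt_pos.mpr (mul_pos ha hb))).ne'
  have hpow : (a / b) ^ (l / 2) = ((b / a) ^ (l / 2))⁻¹ := by
    rw [← inv_rpow (div_pos hb ha).le, inv_div]
  have hpow_ne : (b / a) ^ (l / 2) ≠ 0 := (rpow_pos_of_pos (div_pos hb ha) _).ne'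
  have hI : ∫ s in Set.Ioi (0 : ℝ), s ^ (l - 1) * exp (-(a * s + b / s) / 2)
      = 2 * (b / a) ^ (l / 2) * besselK l √(a * b) := integral_gigKernel l ha hb
  refine ⟨hI, ?_⟩
  simp only [mul_assoc]
  rw [integral_const_mul, hI, hpow]
  grind
end

section
/- For all η > 0 and ρ² > 0, ∫_{−∞}^{∞} exp(−√(η (η + x²/ρ²))) dx = 2 √(η ρ²) K₁(η); that is, the hyperbolic density with shape η and scale ρ² integrates to 1 over ℝ. -/
open MeasureTheory Real

/-!
The integrand depends on `x` only through `|x|`, so the integral is twice the integral over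
`(0, ∞)`. There the substitution `x = √(η ρ²) sinh t` turns `η (η + x² / ρ²)` into the square
`(η cosh t)²`, and the Jacobian `√(η ρ²) cosh t` leaves exactly the integral defining
`√(η ρ²) K₁(η)`.
-/

theorem image_const_mul_sinh_Ioi {c : ℝ} (hc : 0 < c) :
    (fun t => c * sinh t) '' Set.Ioi 0 = Set.Ioi 0 := by
  ext y
  constructor
  · rintro ⟨t, ht, rfl⟩
    exact mul_pos hc (sinh_pos_iff.mpr ht)
  · intro hy
    refine ⟨arsinh (y / c), arsinh_pos_iff.mpr (div_pos hy hc), ?_⟩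
    simp only [sinh_arsinh, mul_div_cancel₀ _ hc.ne']

theorem integral_Ioi_eq_integral_Ioi_const_mul_sinh {E : Type*} [NormedAddCommGroup E]
    [NormedSpace ℝ E] {c : ℝ} (hc : 0 < c) (f : ℝ → E) :
    ∫ x in Set.Ioi 0, f x = ∫ t in Set.Ioi 0, (c * cosh t) • f (c * sinh t) := by
  have hderiv : ∀ t ∈ Set.Ioi (0 : ℝ),
      HasDerivWithinAt (fun t => c * sinh t) (c * cosh t) (Set.Ioi 0) t :=
    fun t _ => ((hasDerivAt_sinh t).const_mul c).hasDerivWithinAt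
  have hinj : Set.InjOn (fun t => c * sinh t) (Set.Ioi 0) :=
    fun a _ b _ h => sinh_injective (mul_left_cancel₀ hc.ne' h)
  calc ∫ x in Set.Ioi 0, f x = ∫ x in (fun t => c * sinh t) '' Set.Ioi 0, f x := by
        rw [image_const_mul_sinh_Ioi hc]
    _ = ∫ t in Set.Ioi 0, |c * cosh t| • f (c * sinh t) :=
        integral_image_eq_integral_abs_deriv_smul measurableSet_Ioi hderiv hinj f
    _ = ∫ t in Set.Ioi 0, (c * cosh t) • f (c * sinh t) := by
        simp only [abs_of_pos (mul_pos hc (cosh_pos _))]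

theorem sqrt_mul_add_sq_sqrt_mul_sinh_div {η ρ2 : ℝ} (hη : 0 ≤ η) (hρ : 0 < ρ2) (t : ℝ) :
    √(η * (η + (√(η * ρ2) * sinh t) ^ 2 / ρ2)) = η * cosh t := by
  have hsq : η * (η + (√(η * ρ2) * sinh t) ^ 2 / ρ2) = (η * cosh t) ^ 2 := by
    rw [mul_pow, mul_pow, sq_sqrt (mul_nonneg hη hρ.le), cosh_sq]
    field_simp
    ring
  rw [hsq, sqrt_sq (mul_nonneg hη (cosh_pos t).le)]

/-- The hyperbolic density with shape `η` and scale `ρ²` integrates to one over `ℝ`. -/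
theorem hyperbolic_normalization (η ρ2 : ℝ) (hη : 0 < η) (hρ : 0 < ρ2) :
    ∫ x : ℝ, Real.exp (-Real.sqrt (η * (η + x ^ 2 / ρ2)))
      = 2 * Real.sqrt (η * ρ2) * besselK 1 η := by
  have hc : 0 < √(η * ρ2) := sqrt_pos.mpr (mul_pos hη hρ)
  calc ∫ x : ℝ, exp (-√(η * (η + x ^ 2 / ρ2)))
      = ∫ x : ℝ, exp (-√(η * (η + |x| ^ 2 / ρ2))) := by simp only [sq_abs]
    _ = 2 * ∫ x in Set.Ioi 0, exp (-√(η * (η + x ^ 2 / ρ2))) :=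
      integral_comp_abs (f := fun x => exp (-√(η * (η + x ^ 2 / ρ2))))
    _ = 2 * ∫ t in Set.Ioi 0, √(η * ρ2) * (exp (-η * cosh t) * cosh (1 * t)) := by
      rw [integral_Ioi_eq_integral_Ioi_const_mul_sinh hc]
      congr 1
      refine integral_congr_ae (.of_forall fun t => ?_)
      dsimp only
      rw [smul_eq_mul, sqrt_mul_add_sq_sqrt_mul_sinh_div hη.le hρ, one_mul, neg_mul]
      ring
    _ = 2 * √(η * ρ2) * besselK 1 η := by rw [integral_const_mul, besselK, mul_assoc]
end

section
/- (Gneiting's representation) For all η > 0, ρ² > 0 and x ∈ ℝ, the integral over s ∈ (0, ∞) of (2π s)^(−1/2) · exp(−x²/(2s)) · exp(−(1/2)((η/ρ²) s + η ρ²/s)) with respect to s equals √(ρ²/η) · exp(−√(η (η + x²/ρ²))); that is, a normal scale mixture with variance s and unnormalized GIG(1, η/ρ², η ρ²) mixing kernel produces the unnormalized hyperbolic kernel with shape η and scale ρ². -/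
/-!
After the substitution `s = t²`, completing the square `a t² + b / t² = (√a t - √b / t)² + 2√(ab)`
turns the mixture integral into `∫₀^∞ g(α t - β / t) dt` with `g` a Gaussian. The map
`t ↦ α t - β / t` is a bijection `(0, ∞) → ℝ` with Jacobian `α + β / t²`, and the involution
`t ↦ (β / α) / t` flips the sign of `α t - β / t` while exchanging the two halves `α` and `β / t²`
of the Jacobian. For even integrable `g` this gives the Cauchy–Schlömilch identity
`∫₀^∞ g(α t - β / t) dt = (2α)⁻¹ ∫ g`.
-/

open MeasureTheory Real Set

lemma hasDerivAt_mul_sub_div (a b : ℝ) {t : ℝ} (ht : t ≠ 0) :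
    HasDerivAt (fun t ↦ a * t - b / t) (a + b / t ^ 2) t := by
  have := ((hasDerivAt_id' t).const_mul a).sub ((hasDerivAt_inv ht).const_mul b)
  simp only [mul_one, mul_neg, sub_neg_eq_add, ← div_eq_mul_inv] at this
  exact this

section CauchySchlomilch

variable {E : Type*} [NormedAddCommGroup E] [NormedSpace ℝ E] {a b : ℝ}

lemma strictMonoOn_mul_sub_div (ha : 0 < a) (hb : 0 ≤ b) :
    StrictMonoOn (fun t ↦ a * t - b / t) (Ioi 0) := by
  intro s hs t ht hst
  have : b / t ≤ b / s := div_le_div_of_nonneg_left hb hs hst.le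
  dsimp only
  linarith [mul_lt_mul_of_pos_left hst ha]

lemma image_mul_sub_div_Ioi (ha : 0 < a) (hb : 0 < b) :
    (fun t ↦ a * t - b / t) '' Ioi 0 = univ := by
  refine eq_univ_of_forall fun y ↦ ?_
  -- the positive root of `a t² - y t - b = 0`
  set D := √(y ^ 2 + 4 * a * b)
  have hD : D ^ 2 = y ^ 2 + 4 * a * b := sq_sqrt (by positivity)
  have hyD : 0 < y + D := by nlinarith [sqrt_nonneg (y ^ 2 + 4 * a * b), mul_pos ha hb]
  refine ⟨(y + D) / (2 * a), div_pos hyD (by positivity), ?_⟩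
  field_simp
  nlinarith

theorem integral_comp_mul_sub_div_Ioi (g : ℝ → E) (ha : 0 < a) (hb : 0 < b) :
    ∫ t in Ioi 0, (a + b / t ^ 2) • g (a * t - b / t) = ∫ u, g u := by
  have := integral_image_eq_integral_abs_deriv_smul measurableSet_Ioi
    (fun t ht ↦ (hasDerivAt_mul_sub_div a b (ne_of_gt ht)).hasDerivWithinAt)
    (strictMonoOn_mul_sub_div ha hb.le).injOn g
  rw [image_mul_sub_div_Ioi ha hb, Measure.restrict_univ] at this
  rw [this]
  refine setIntegral_congr_fun measurableSet_Ioi fun t (ht : 0 < t) ↦ ?_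
  rw [abs_of_pos (by positivity)]

theorem integrableOn_comp_mul_sub_div_Ioi (g : ℝ → E) (ha : 0 < a) (hb : 0 < b) :
    IntegrableOn (fun t ↦ (a + b / t ^ 2) • g (a * t - b / t)) (Ioi 0) ↔ Integrable g := by
  have := integrableOn_image_iff_integrableOn_abs_deriv_smul measurableSet_Ioi
    (fun t ht ↦ (hasDerivAt_mul_sub_div a b (ne_of_gt ht)).hasDerivWithinAt)
    (strictMonoOn_mul_sub_div ha hb.le).injOn g
  rw [image_mul_sub_div_Ioi ha hb, integrableOn_univ] at this
  rw [this]
  refine integrableOn_congr_fun (fun t (ht : 0 < t) ↦ ?_) measurableSet_Ioi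
  rw [abs_of_pos (by positivity)]

theorem integral_comp_div_Ioi (h : ℝ → E) {c : ℝ} (hc : 0 < c) :
    ∫ t in Ioi 0, (c / t ^ 2) • h (c / t) = ∫ t in Ioi 0, h t := by
  have himage : (fun t ↦ c / t) '' Ioi 0 = Ioi 0 := by
    refine Subset.antisymm (image_subset_iff.mpr fun t ht ↦ div_pos hc ht) fun u hu ↦ ?_
    exact ⟨c / u, div_pos hc hu, div_div_cancel₀ hc.ne'⟩
  have hderiv : ∀ t ∈ Ioi (0 : ℝ), HasDerivWithinAt (fun t ↦ c / t) (-(c / t ^ 2)) (Ioi 0) t :=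
    fun t ht ↦ by
      simpa [div_eq_mul_inv] using ((hasDerivAt_inv (ne_of_gt ht)).const_mul c).hasDerivWithinAt
  have hinj : InjOn (fun t ↦ c / t) (Ioi 0) := fun s _ t _ hst ↦
    inv_injective (mul_left_cancel₀ hc.ne' (by simpa [div_eq_mul_inv] using hst))
  have := integral_image_eq_integral_abs_deriv_smul measurableSet_Ioi hderiv hinj h
  rw [himage] at this
  rw [this]
  refine setIntegral_congr_fun measurableSet_Ioi fun t (ht : 0 < t) ↦ ?_
  rw [abs_neg, abs_of_pos (by positivity)]

theorem integral_Ioi_comp_mul_sub_div_of_even {g : ℝ → E} (hg : Integrable g)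
    (hg_even : Function.Even g) (ha : 0 < a) (hb : 0 < b) :
    ∫ t in Ioi 0, g (a * t - b / t) = (2 * a)⁻¹ • ∫ u, g u := by
  set G : ℝ → E := fun t ↦ g (a * t - b / t)
  have hJG : IntegrableOn (fun t ↦ (a + b / t ^ 2) • G t) (Ioi 0) :=
    (integrableOn_comp_mul_sub_div_Ioi g ha hb).mpr hg
  have hG : IntegrableOn G (Ioi 0) := by
    have hbdd : ∀ᵐ t ∂volume.restrict (Ioi 0), ‖(a + b / t ^ 2)⁻¹‖ ≤ a⁻¹ := by
      filter_upwards [ae_restrict_mem measurableSet_Ioi] with t (ht : 0 < t)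
      rw [norm_inv, Real.norm_of_nonneg (by positivity)]
      exact inv_anti₀ ha (le_add_of_nonneg_right (by positivity))
    have := hJG.bdd_smul a⁻¹ (Measurable.aestronglyMeasurable (by fun_prop)) hbdd
    refine IntegrableOn.congr_fun this (fun t (ht : 0 < t) ↦ ?_) measurableSet_Ioi
    simp only [Pi.smul_apply', smul_smul]
    rw [inv_mul_cancel₀ (by positivity), one_smul]
  have hbG : IntegrableOn (fun t ↦ (b / t ^ 2) • G t) (Ioi 0) := by
    refine (hJG.sub (hG.smul a)).congr_fun (fun t _ ↦ ?_) measurableSet_Ioi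
    simp only [Pi.sub_apply, Pi.smul_apply, add_smul, add_sub_cancel_left]
  have hreflect : ∫ t in Ioi 0, (b / t ^ 2) • G t = ∫ t in Ioi 0, a • G t := by
    rw [← integral_comp_div_Ioi (fun t ↦ a • G t) (div_pos hb ha)]
    refine setIntegral_congr_fun measurableSet_Ioi fun t (ht : 0 < t) ↦ ?_
    have hsign : a * (b / a / t) - b / (b / a / t) = -(a * t - b / t) := by
      field_simp; ring
    simp only [G, smul_smul, hsign]
    rw [hg_even]
    congr 1
    field_simp
  calc ∫ t in Ioi 0, G t
      = (2 * a)⁻¹ • ∫ t in Ioi 0, (a + b / t ^ 2) • G t := by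
        simp only [add_smul]
        rw [integral_add (f := fun t ↦ a • G t) (hG.smul a) hbG, hreflect, integral_smul,
          ← two_smul ℝ, smul_smul, smul_smul, mul_assoc, inv_mul_cancel₀ (by positivity),
          one_smul]
    _ = (2 * a)⁻¹ • ∫ u, g u := by rw [integral_comp_mul_sub_div_Ioi g ha hb]

end CauchySchlomilch

theorem integral_Ioi_exp_neg_sq_mul_sub_div {a b : ℝ} (ha : 0 < a) (hb : 0 < b) :
    ∫ t in Ioi 0, exp (-(a * t - b / t) ^ 2 / 2) = √(2 * π) / (2 * a) := by
  have hgauss : ∫ u : ℝ, exp (-u ^ 2 / 2) = √(2 * π) := by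
    simpa [neg_div, div_eq_inv_mul, ← neg_mul] using integral_gaussian 2⁻¹
  have hint : Integrable fun u : ℝ ↦ exp (-u ^ 2 / 2) := by
    simpa [neg_div, div_eq_inv_mul, ← neg_mul] using
      integrable_exp_neg_mul_sq (b := 2⁻¹) (by norm_num)
  rw [integral_Ioi_comp_mul_sub_div_of_even (g := fun u ↦ exp (-u ^ 2 / 2)) hint
    (fun u ↦ by simp only [neg_sq]) ha hb, hgauss, smul_eq_mul, inv_mul_eq_div]

theorem integral_Ioi_rpow_neg_half_mul_exp {a b : ℝ} (ha : 0 < a) (hb : 0 < b) :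
    ∫ s in Ioi 0, s ^ (-(1 : ℝ) / 2) * exp (-(a * s + b / s) / 2)
      = √(2 * π / a) * exp (-√(a * b)) := by
  have hsa : 0 < √a := sqrt_pos.mpr ha
  have hsb : 0 < √b := sqrt_pos.mpr hb
  rw [← integral_comp_rpow_Ioi_of_pos two_pos]
  have hsquare : ∀ t ∈ Ioi (0 : ℝ),
      ((2 : ℝ) * t ^ ((2 : ℝ) - 1)) • ((t ^ (2 : ℝ)) ^ (-(1 : ℝ) / 2)
          * exp (-(a * t ^ (2 : ℝ) + b / t ^ (2 : ℝ)) / 2))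
        = 2 * exp (-√(a * b)) * exp (-(√a * t - √b / t) ^ 2 / 2) := by
    intro t (ht : 0 < t)
    have hpow : (t ^ (2 : ℝ)) ^ (-(1 : ℝ) / 2) = t⁻¹ := by
      rw [← rpow_mul ht.le]; norm_num [rpow_neg_one]
    have hcomplete : a * t ^ 2 + b / t ^ 2 = (√a * t - √b / t) ^ 2 + 2 * √(a * b) := by
      rw [sqrt_mul ha.le]
      field_simp
      linear_combination -(t ^ 4 * sq_sqrt ha.le) - sq_sqrt hb.le
    rw [hpow, smul_eq_mul, show (2 : ℝ) - 1 = 1 by norm_num, rpow_one, rpow_two, hcomplete]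
    rw [show -((√a * t - √b / t) ^ 2 + 2 * √(a * b)) / 2
        = -√(a * b) + -(√a * t - √b / t) ^ 2 / 2 by ring, exp_add]
    field_simp
  rw [setIntegral_congr_fun measurableSet_Ioi hsquare, integral_const_mul,
    integral_Ioi_exp_neg_sq_mul_sub_div hsa hsb, sqrt_div' _ ha.le]
  field_simp

/-- Gneiting's representation: a normal scale mixture with variance `s` and
unnormalized `GIG(1, η/ρ², η ρ²)` mixing kernel produces the unnormalized
hyperbolic kernel with shape `η` and scale `ρ²`. -/
theorem gneiting_representation (η ρ2 x : ℝ) (hη : 0 < η) (hρ : 0 < ρ2) :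
    ∫ s in Set.Ioi (0 : ℝ),
        (2 * π * s) ^ (-(1 : ℝ) / 2) * Real.exp (-x ^ 2 / (2 * s))
          * Real.exp (-(1 / 2) * ((η / ρ2) * s + η * ρ2 / s))
      = Real.sqrt (ρ2 / η) * Real.exp (-Real.sqrt (η * (η + x ^ 2 / ρ2))) := by
  have h2π : (0 : ℝ) < 2 * π := by positivity
  have hmix : ∀ s ∈ Ioi (0 : ℝ),
      (2 * π * s) ^ (-(1 : ℝ) / 2) * exp (-x ^ 2 / (2 * s))
          * exp (-(1 / 2) * ((η / ρ2) * s + η * ρ2 / s))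
        = (√(2 * π))⁻¹
            * (s ^ (-(1 : ℝ) / 2) * exp (-(η / ρ2 * s + (η * ρ2 + x ^ 2) / s) / 2)) := by
    intro s (hs : 0 < s)
    rw [mul_rpow h2π.le hs.le, mul_assoc, mul_assoc, ← exp_add, sqrt_eq_rpow,
      ← rpow_neg h2π.le]
    congr 1
    · norm_num
    congr 2
    field_simp
    ring
  have hexponent : η / ρ2 * (η * ρ2 + x ^ 2) = η * (η + x ^ 2 / ρ2) := by
    field_simp
  have hscale : (√(2 * π))⁻¹ * √(2 * π / (η / ρ2)) = √(ρ2 / η) := by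
    rw [sqrt_div' _ (by positivity : (0 : ℝ) ≤ η / ρ2), sqrt_div' _ hη.le, sqrt_div' _ hρ.le]
    field_simp
  rw [setIntegral_congr_fun measurableSet_Ioi hmix, integral_const_mul,
    integral_Ioi_rpow_neg_half_mul_exp (by positivity) (by positivity), ← mul_assoc, hscale,
    hexponent]
end
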